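/- arXiv:1103.4965 — 5 statements merged into one kernel-verified Lean document; each statement's English description precedes it below -/
import Mathlib

section
/- Let σ>0, λ>0, T>0, α=log(1+σ), β=σλ. Let f:(0,∞)→ℝ be continuously differentiable and suppose: (i) there exists S₀>0 with ∑_{k=0}^∞ |f(S₀e^{αk−βT})| (λT)^k/k! < ∞; (ii) for every x₀∈(0,∞) there exists ε∈(0,x₀) such that the series ∑_{k=0}^∞ |f'(xe^{αk})| (e^{α}λT)^k/k! converges uniformly for x∈(x₀−ε, x₀+ε). Then for every (t,x)∈[0,T]×(0,∞) the series defining V(t,x) converges, the partial derivative ∂V/∂x(t,x) exists, and ∂V/∂x(t,x) = e^{−(λ+β)(T−t)} ∑_{k=0}^∞ f'(xe^{αk+βt−βT}) (e^{α}λ(T−t))^k/k!. -/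
/-!
Write `c = e^{β(t-T)} ∈ (0, 1]`, so that the `k`-th term of `V(t, ·)` at `y` is the `k`-th term
of the series `∑ f(u e^{αk}) (λT)^k/k!` at `u = c y`, with the weight `(λT)^k` lowered to
`(λ(T-t))^k`. By the fundamental theorem of calculus the terms of that series at two points of
`(0, ∞)` differ by integrals of the terms of the derivative series, whose absolute series
converges locally uniformly by (ii); dominated convergence then propagates summability from
`S₀ e^{-βT}` to every point. The derivative series of `V(t, ·)` is dominated termwise by the
series (ii) at `c y`, so it also converges locally uniformly, and term-by-term differentiation
applies.
-/

open Filter Set Finset Topology Real MeasureTheory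

section SeriesOfFunctions

variable {X : Type*} [TopologicalSpace X] {s : Set X} {g b : ℕ → X → ℝ}

theorem TendstoLocallyUniformlyOn.hasSum_of_nonneg (hb₀ : ∀ k, ∀ u ∈ s, 0 ≤ b k u)
    (hb : TendstoLocallyUniformlyOn (fun n u => ∑ k ∈ range n, b k u) (fun u => ∑' k, b k u)
      atTop s) {u : X} (hu : u ∈ s) : HasSum (b · u) (∑' k, b k u) :=
  (hasSum_iff_tendsto_nat_of_nonneg (fun k => hb₀ k u hu) _).2 (hb.tendsto_at hu)

theorem TendstoLocallyUniformlyOn.tsum_of_abs_le (hgb : ∀ k, ∀ u ∈ s, |g k u| ≤ b k u)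
    (hb : TendstoLocallyUniformlyOn (fun n u => ∑ k ∈ range n, b k u) (fun u => ∑' k, b k u)
      atTop s) :
    TendstoLocallyUniformlyOn (fun n u => ∑ k ∈ range n, g k u) (fun u => ∑' k, g k u)
      atTop s := by
  have htail : ∀ n, ∀ u ∈ s,
      dist (∑' k, g k u) (∑ k ∈ range n, g k u) ≤ dist (∑' k, b k u) (∑ k ∈ range n, b k u) := by
    intro n u hu
    have hbu := hb.hasSum_of_nonneg (fun k u hu => (abs_nonneg _).trans (hgb k u hu)) hu
    have hgu : Summable (g · u) := hbu.summable.of_norm_bounded fun k => hgb k u hu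
    rw [Real.dist_eq, Real.dist_eq, ← hgu.sum_add_tsum_nat_add n, add_sub_cancel_left]
    exact (tsum_of_norm_bounded (f := fun k => g (k + n) u) ((hasSum_nat_add_iff' n).2 hbu)
      fun k => hgb (k + n) u hu).trans (le_abs_self _)
  rw [Metric.tendstoLocallyUniformlyOn_iff] at hb ⊢
  intro ε hε x hx
  obtain ⟨t, ht, hbt⟩ := hb ε hε x hx
  exact ⟨t ∩ s, inter_mem ht self_mem_nhdsWithin,
    hbt.mono fun n hn u hu => (htail n u hu.2).trans_lt (hn u hu.1)⟩

end SeriesOfFunctions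

section TermwiseDifferentiation

variable {s : Set ℝ} {g g' b : ℕ → ℝ → ℝ}

theorem summable_of_summable_hasDerivAt_of_tendstoLocallyUniformlyOn (hs : s.OrdConnected)
    (hg : ∀ k, ∀ u ∈ s, HasDerivAt (g k) (g' k u) u) (hg' : ∀ k, ContinuousOn (g' k) s)
    (hgb : ∀ k, ∀ u ∈ s, |g' k u| ≤ b k u) (hb : ∀ k, ContinuousOn (b k) s)
    (hU : TendstoLocallyUniformlyOn (fun n u => ∑ k ∈ range n, b k u) (fun u => ∑' k, b k u)
      atTop s)
    {y z : ℝ} (hz : z ∈ s) (hgz : Summable (g · z)) (hy : y ∈ s) : Summable (g · y) := by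
  have hI : uIcc z y ⊆ s := hs.uIcc_subset hz hy
  have hI' : uIoc z y ⊆ s := uIoc_subset_uIcc.trans hI
  have hb_sum : ∀ u ∈ s, HasSum (b · u) (∑' k, b k u) := fun u hu =>
    hU.hasSum_of_nonneg (fun k u hu => (abs_nonneg _).trans (hgb k u hu)) hu
  have hb_cont : ContinuousOn (fun u => ∑' k, b k u) s :=
    hU.continuousOn (Frequently.of_forall fun n => continuousOn_finsetSum _ fun k _ => hb k)
  have hint : HasSum (fun k => ∫ u in z..y, g' k u) (∫ u in z..y, ∑' k, g' k u) :=
    intervalIntegral.hasSum_integral_of_dominated_convergence b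
      (fun k => ((hg' k).mono hI').aestronglyMeasurable measurableSet_uIoc)
      (fun k => ae_of_all _ fun u hu => hgb k u (hI' hu))
      (ae_of_all _ fun u hu => (hb_sum u (hI' hu)).summable)
      (hb_cont.mono hI).intervalIntegrable
      (ae_of_all _ fun u hu =>
        ((hb_sum u (hI' hu)).summable.of_norm_bounded fun k => hgb k u (hI' hu)).hasSum)
  have hftc : ∀ k, g k z + ∫ u in z..y, g' k u = g k y := fun k => by
    rw [intervalIntegral.integral_eq_sub_of_hasDerivAt (fun u hu => hg k u (hI hu))
      ((hg' k).mono hI).intervalIntegrable, add_sub_cancel]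
  exact (hgz.add hint.summable).congr hftc

theorem hasDerivAt_tsum_of_tendstoLocallyUniformlyOn (hs : IsOpen s)
    (hg : ∀ k, ∀ u ∈ s, HasDerivAt (g k) (g' k u) u) (hgs : ∀ u ∈ s, Summable (g · u))
    (hgb : ∀ k, ∀ u ∈ s, |g' k u| ≤ b k u)
    (hU : TendstoLocallyUniformlyOn (fun n u => ∑ k ∈ range n, b k u) (fun u => ∑' k, b k u)
      atTop s)
    {x : ℝ} (hx : x ∈ s) : HasDerivAt (fun u => ∑' k, g k u) (∑' k, g' k x) x :=
  hasDerivAt_of_tendstoLocallyUniformlyOn hs (hU.tsum_of_abs_le hgb)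
    (Eventually.of_forall fun _ u hu => HasDerivAt.fun_sum fun k _ => hg k u hu)
    (fun u hu => (hgs u hu).hasSum.tendsto_sum_nat) hx

end TermwiseDifferentiation

theorem exp_mul_nat_mul_pow (α r : ℝ) (k : ℕ) : exp (α * k) * r ^ k = (exp α * r) ^ k := by
  rw [mul_comm α, exp_nat_mul, mul_pow]

theorem abs_mul_pow_div_factorial (a : ℝ) {r : ℝ} (hr : 0 ≤ r) (k : ℕ) :
    |a * r ^ k / k.factorial| = |a| * r ^ k / k.factorial := by
  rw [abs_div, abs_mul, abs_of_nonneg (pow_nonneg hr k), Nat.abs_cast]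

theorem exp_add_sub_eq_mul (a b c : ℝ) : exp (a + b - c) = exp (b - c) * exp a := by
  rw [← exp_add]; ring_nf

section PoissonSeries

variable {f f' : ℝ → ℝ} {α lam T : ℝ}

theorem hasDerivAt_comp_mul_mul_pow_div (hfd : ∀ x ∈ Ioi (0 : ℝ), HasDerivAt f (f' x) x)
    {E u : ℝ} (hE : 0 < E) (hu : 0 < u) (r : ℝ) (k : ℕ) :
    HasDerivAt (fun y => f (y * E) * r ^ k / k.factorial)
      (f' (u * E) * E * r ^ k / k.factorial) u :=
  (((hfd _ (mul_pos hu hE)).comp u (hasDerivAt_mul_const E)).mul_const (r ^ k)).div_const _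

theorem summable_comp_mul_exp_of_tendstoLocallyUniformlyOn
    (hfd : ∀ x ∈ Ioi (0 : ℝ), HasDerivAt f (f' x) x) (hfc : ContinuousOn f' (Ioi 0))
    (hlam : 0 ≤ lam) (hT : 0 ≤ T)
    (hU : TendstoLocallyUniformlyOn
      (fun n x => ∑ k ∈ range n, |f' (x * exp (α * k))| * (exp α * lam * T) ^ k / k.factorial)
      (fun x => ∑' k : ℕ, |f' (x * exp (α * k))| * (exp α * lam * T) ^ k / k.factorial)
      atTop (Ioi 0))
    {y z : ℝ} (hz : 0 < z)
    (hfz : Summable fun k : ℕ => f (z * exp (α * k)) * (lam * T) ^ k / k.factorial)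
    (hy : 0 < y) : Summable fun k : ℕ => f (y * exp (α * k)) * (lam * T) ^ k / k.factorial := by
  have hw : 0 ≤ exp α * lam * T := by positivity
  refine summable_of_summable_hasDerivAt_of_tendstoLocallyUniformlyOn ordConnected_Ioi
    (g' := fun k u => f' (u * exp (α * k)) * (exp α * lam * T) ^ k / k.factorial)
    (fun k u hu => (hasDerivAt_comp_mul_mul_pow_div hfd (exp_pos _) hu _ k).congr_deriv ?_)
    (fun k => ?_) (fun k u _ => ?_) (fun k => ?_) hU hz hfz hy
  · rw [mul_assoc (f' _), exp_mul_nat_mul_pow, mul_assoc (exp α)]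
  · exact ((hfc.comp (continuous_mul_const _).continuousOn
      fun u hu => mul_pos hu (exp_pos _)).mul continuousOn_const).div_const _
  · rw [abs_mul_pow_div_factorial _ hw]
  · exact ((hfc.comp (continuous_mul_const _).continuousOn
      fun u hu => mul_pos hu (exp_pos _)).abs.mul continuousOn_const).div_const _

variable {β t : ℝ}

theorem summable_abs_comp_mul_exp_add_sub
    (hsum : ∀ y, 0 < y → Summable fun k : ℕ => f (y * exp (α * k)) * (lam * T) ^ k / k.factorial)
    (hlam : 0 ≤ lam) (ht : t ∈ Icc 0 T) {x : ℝ} (hx : 0 < x) :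
    Summable fun k : ℕ =>
      |f (x * exp (α * k + β * t - β * T))| * (lam * (T - t)) ^ k / k.factorial := by
  have hτ : 0 ≤ lam * (T - t) := mul_nonneg hlam (sub_nonneg.2 ht.2)
  have hlamT : 0 ≤ lam * T := mul_nonneg hlam (ht.1.trans ht.2)
  refine (hsum _ (mul_pos hx (exp_pos (β * t - β * T)))).abs.of_nonneg_of_le
    (fun k => by positivity) fun k => ?_
  rw [exp_add_sub_eq_mul, ← mul_assoc, abs_mul_pow_div_factorial _ hlamT]
  gcongr
  exact sub_le_self _ ht.1

theorem hasDerivAt_tsum_comp_mul_exp_add_sub (hfd : ∀ x ∈ Ioi (0 : ℝ), HasDerivAt f (f' x) x)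
    (hU : TendstoLocallyUniformlyOn
      (fun n x => ∑ k ∈ range n, |f' (x * exp (α * k))| * (exp α * lam * T) ^ k / k.factorial)
      (fun x => ∑' k : ℕ, |f' (x * exp (α * k))| * (exp α * lam * T) ^ k / k.factorial)
      atTop (Ioi 0))
    (hlam : 0 ≤ lam) (hβ : 0 ≤ β) (ht : t ∈ Icc 0 T)
    (hsum : ∀ y, 0 < y → Summable fun k : ℕ =>
      |f (y * exp (α * k + β * t - β * T))| * (lam * (T - t)) ^ k / k.factorial)
    {x : ℝ} (hx : 0 < x) :
    HasDerivAt
      (fun y => ∑' k : ℕ, f (y * exp (α * k + β * t - β * T)) * (lam * (T - t)) ^ k / k.factorial)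
      (exp (β * t - β * T) * ∑' k : ℕ,
        f' (x * exp (α * k + β * t - β * T)) * (exp α * lam * (T - t)) ^ k / k.factorial) x := by
  set c := exp (β * t - β * T)
  have hc : c ≤ 1 := exp_le_one_iff.2 (by nlinarith [ht.2])
  have hτ : 0 ≤ lam * (T - t) := mul_nonneg hlam (sub_nonneg.2 ht.2)
  have hw : 0 ≤ exp α * lam * (T - t) := by rw [mul_assoc]; positivity
  rw [← tsum_mul_left]
  refine hasDerivAt_tsum_of_tendstoLocallyUniformlyOn isOpen_Ioi
    (g' := fun k u => c * (f' (u * exp (α * k + β * t - β * T)) * (exp α * lam * (T - t)) ^ k /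
      k.factorial))
    (b := fun k u => |f' (u * c * exp (α * k))| * (exp α * lam * T) ^ k / k.factorial)
    (fun k u hu => (hasDerivAt_comp_mul_mul_pow_div hfd (exp_pos _) hu _ k).congr_deriv ?_)
    (fun u hu => (hsum u hu).of_norm_bounded fun k => (abs_mul_pow_div_factorial _ hτ k).le)
    (fun k u _ => ?_)
    (hU.comp (· * c) (fun u hu => mul_pos hu (exp_pos _)) (continuous_mul_const c).continuousOn)
    hx
  · rw [exp_add_sub_eq_mul, mul_assoc (exp α), ← exp_mul_nat_mul_pow]
    ring
  · rw [exp_add_sub_eq_mul, ← mul_assoc, abs_mul, abs_of_pos (exp_pos _),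
      abs_mul_pow_div_factorial _ hw]
    refine (mul_le_of_le_one_left (by positivity) hc).trans ?_
    gcongr
    exact sub_le_self _ ht.1

end PoissonSeries

theorem stmt_0_general (σ lam T : ℝ) (hσ : 0 < σ) (hlam : 0 < lam)
    (α β : ℝ) (hβ : β = σ * lam)
    (f f' : ℝ → ℝ)
    (hfd : ∀ x ∈ Set.Ioi (0 : ℝ), HasDerivAt f (f' x) x)
    (hfc : ContinuousOn f' (Set.Ioi 0))
    (hi : ∃ S₀ : ℝ, 0 < S₀ ∧ Summable (fun k : ℕ =>
      |f (S₀ * Real.exp (α * (k : ℝ) - β * T))| * (lam * T) ^ k / (k.factorial : ℝ)))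
    (hii : ∀ x₀ : ℝ, 0 < x₀ → ∃ ε : ℝ, 0 < ε ∧ ε < x₀ ∧
      TendstoUniformlyOn
        (fun n x => ∑ k ∈ Finset.range n,
          |f' (x * Real.exp (α * (k : ℝ)))| * (Real.exp α * lam * T) ^ k / (k.factorial : ℝ))
        (fun x => ∑' k : ℕ,
          |f' (x * Real.exp (α * (k : ℝ)))| * (Real.exp α * lam * T) ^ k / (k.factorial : ℝ))
        Filter.atTop (Set.Ioo (x₀ - ε) (x₀ + ε))) :
    ∀ t ∈ Set.Icc (0 : ℝ) T, ∀ x : ℝ, 0 < x →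
      Summable (fun k : ℕ =>
        |f (x * Real.exp (α * (k : ℝ) + β * t - β * T))| * (lam * (T - t)) ^ k / (k.factorial : ℝ)) ∧
      HasDerivAt
        (fun y => Real.exp (-(lam * (T - t))) * ∑' k : ℕ,
          f (y * Real.exp (α * (k : ℝ) + β * t - β * T)) * (lam * (T - t)) ^ k / (k.factorial : ℝ))
        (Real.exp (-((lam + β) * (T - t))) * ∑' k : ℕ,
          f' (x * Real.exp (α * (k : ℝ) + β * t - β * T)) *
            (Real.exp α * lam * (T - t)) ^ k / (k.factorial : ℝ))
        x := by
  intro t ht x hx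
  obtain ⟨S₀, hS₀, hS₀_sum⟩ := hi
  have hT : 0 ≤ T := ht.1.trans ht.2
  have hlamT : 0 ≤ lam * T := mul_nonneg hlam.le hT
  have hU : TendstoLocallyUniformlyOn
      (fun n x => ∑ k ∈ range n, |f' (x * exp (α * k))| * (exp α * lam * T) ^ k / k.factorial)
      (fun x => ∑' k : ℕ, |f' (x * exp (α * k))| * (exp α * lam * T) ^ k / k.factorial)
      atTop (Ioi 0) :=
    tendstoLocallyUniformlyOn_of_forall_exists_nhds fun x₀ hx₀ => by
      obtain ⟨ε, hε, -, hU₀⟩ := hii x₀ hx₀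
      exact ⟨_, mem_nhdsWithin_of_mem_nhds (Ioo_mem_nhds (by linarith) (by linarith)), hU₀⟩
  have hsum₀ : Summable fun k : ℕ =>
      f (S₀ * exp (-(β * T)) * exp (α * k)) * (lam * T) ^ k / k.factorial :=
    hS₀_sum.of_norm_bounded fun k => by
      rw [Real.norm_eq_abs, abs_mul_pow_div_factorial _ hlamT, mul_assoc, ← exp_add,
        neg_add_eq_sub]
  have hsum : ∀ y, 0 < y → Summable fun k : ℕ =>
      f (y * exp (α * k)) * (lam * T) ^ k / k.factorial := fun y hy =>
    summable_comp_mul_exp_of_tendstoLocallyUniformlyOn hfd hfc hlam.le hT hU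
      (mul_pos hS₀ (exp_pos _)) hsum₀ hy
  have hsum_t := fun y (hy : 0 < y) =>
    summable_abs_comp_mul_exp_add_sub (β := β) hsum hlam.le ht hy
  refine ⟨hsum_t x hx, ?_⟩
  have hβ₀ : 0 ≤ β := hβ ▸ (mul_pos hσ hlam).le
  refine ((hasDerivAt_tsum_comp_mul_exp_add_sub hfd hU hlam.le hβ₀ ht hsum_t hx).const_mul
    (exp (-(lam * (T - t))))).congr_deriv ?_
  rw [← mul_assoc, ← exp_add]
  congr 2
  ring

theorem stmt_0 (σ lam T : ℝ) (hσ : 0 < σ) (hlam : 0 < lam) (hT : 0 < T)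
    (α β : ℝ) (hα : α = Real.log (1 + σ)) (hβ : β = σ * lam)
    (f f' : ℝ → ℝ)
    (hfd : ∀ x ∈ Set.Ioi (0 : ℝ), HasDerivAt f (f' x) x)
    (hfc : ContinuousOn f' (Set.Ioi 0))
    (hi : ∃ S₀ : ℝ, 0 < S₀ ∧ Summable (fun k : ℕ =>
      |f (S₀ * Real.exp (α * (k : ℝ) - β * T))| * (lam * T) ^ k / (k.factorial : ℝ)))
    (hii : ∀ x₀ : ℝ, 0 < x₀ → ∃ ε : ℝ, 0 < ε ∧ ε < x₀ ∧
      TendstoUniformlyOn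
        (fun n x => ∑ k ∈ Finset.range n,
          |f' (x * Real.exp (α * (k : ℝ)))| * (Real.exp α * lam * T) ^ k / (k.factorial : ℝ))
        (fun x => ∑' k : ℕ,
          |f' (x * Real.exp (α * (k : ℝ)))| * (Real.exp α * lam * T) ^ k / (k.factorial : ℝ))
        Filter.atTop (Set.Ioo (x₀ - ε) (x₀ + ε))) :
    ∀ t ∈ Set.Icc (0 : ℝ) T, ∀ x : ℝ, 0 < x →
      Summable (fun k : ℕ =>
        |f (x * Real.exp (α * (k : ℝ) + β * t - β * T))| * (lam * (T - t)) ^ k / (k.factorial : ℝ)) ∧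
      HasDerivAt
        (fun y => Real.exp (-(lam * (T - t))) * ∑' k : ℕ,
          f (y * Real.exp (α * (k : ℝ) + β * t - β * T)) * (lam * (T - t)) ^ k / (k.factorial : ℝ))
        (Real.exp (-((lam + β) * (T - t))) * ∑' k : ℕ,
          f' (x * Real.exp (α * (k : ℝ) + β * t - β * T)) *
            (Real.exp α * lam * (T - t)) ^ k / (k.factorial : ℝ))
        x :=
  stmt_0_general σ lam T hσ hlam α β hβ f f' hfd hfc hi hii
end

section
/- Let σ>0, λ>0, T>0, α=log(1+σ), β=σλ. Let f:(0,∞)→ℝ be continuously differentiable and suppose: (i) there exists S₀>0 with ∑_{k=0}^∞ |f(S₀e^{αk−βT})| (λT)^k/k! < ∞; (ii) for every x₀∈(0,∞) there exists ε∈(0,x₀) such that the series ∑_{k=0}^∞ |f'(xe^{αk})| (e^{α}λT)^k/k! converges uniformly for x∈(x₀−ε, x₀+ε). Then the function (t,x) ↦ e^{−(λ+β)(T−t)} ∑_{k=0}^∞ f'(xe^{αk+βt−βT}) (e^{α}λ(T−t))^k/k! (which equals ∂V/∂x) is jointly continuous on [0,T]×(0,∞). -/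
/-!
For `0 ≤ t ≤ T` the `k`-th term of the series is bounded in absolute value by the `k`-th term of
the majorant in (ii) evaluated at `x e^{β(t-T)}`, because `0 ≤ e^α λ (T - t) ≤ e^α λ T`. Near a
point `(t₀, x₀)` that majorant converges uniformly, so by an M-test with a point-dependent
majorant the series converges uniformly there, and its sum is continuous as a uniform limit of
continuous partial sums.
-/

open Filter Set Real

theorem tendstoUniformlyOn_tsum_of_norm_le {X E : Type*} [NormedAddCommGroup E] [CompleteSpace E]
    {g : ℕ → X → E} {M : ℕ → X → ℝ} {s : Set X}
    (hM : TendstoUniformlyOn (fun n x => ∑ k ∈ Finset.range n, M k x) (fun x => ∑' k, M k x) atTop s)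
    (hg : ∀ k, ∀ x ∈ s, ‖g k x‖ ≤ M k x) :
    TendstoUniformlyOn (fun n x => ∑ k ∈ Finset.range n, g k x) (fun x => ∑' k, g k x) atTop s := by
  have hM_nonneg : ∀ k, ∀ x ∈ s, 0 ≤ M k x := fun k x hx => (norm_nonneg _).trans (hg k x hx)
  have hM_summable : ∀ x ∈ s, Summable (M · x) := fun x hx =>
    ((hasSum_iff_tendsto_nat_of_nonneg (hM_nonneg · x hx) _).2 (hM.tendsto_at hx)).summable
  rw [Metric.tendstoUniformlyOn_iff] at hM ⊢
  intro ε hε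
  filter_upwards [hM ε hε] with n hn x hx
  have hg_summable : Summable (g · x) := (hM_summable x hx).of_norm_bounded (hg · x hx)
  have hM_tail : Summable (fun k => M (k + n) x) := (summable_nat_add_iff n).2 (hM_summable x hx)
  calc dist (∑' k, g k x) (∑ k ∈ Finset.range n, g k x) = ‖∑' k, g (k + n) x‖ := by
        rw [dist_eq_norm, ← hg_summable.sum_add_tsum_nat_add n, add_sub_cancel_left]
    _ ≤ ∑' k, M (k + n) x := tsum_of_norm_bounded hM_tail.hasSum fun k => hg _ x hx
    _ = dist (∑' k, M k x) (∑ k ∈ Finset.range n, M k x) := by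
        rw [Real.dist_eq, ← (hM_summable x hx).sum_add_tsum_nat_add n, add_sub_cancel_left,
          abs_of_nonneg (tsum_nonneg fun k => hM_nonneg _ x hx)]
    _ < ε := hn x hx

theorem abs_jump_term_le (f' : ℝ → ℝ) {α β lam T t : ℝ} (x : ℝ) (k : ℕ) (hlam : 0 ≤ lam)
    (ht : t ∈ Icc 0 T) :
    |f' (x * exp (α * k + β * t - β * T)) * (exp α * lam * (T - t)) ^ k / k.factorial| ≤
      |f' (x * exp (β * t - β * T) * exp (α * k))| * (exp α * lam * T) ^ k / k.factorial := by
  have harg : x * exp (α * k + β * t - β * T) = x * exp (β * t - β * T) * exp (α * k) := by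
    rw [mul_assoc, ← exp_add]; ring_nf
  have hTt : 0 ≤ T - t := by linarith [ht.2]
  rw [harg, abs_div, abs_mul, abs_pow, Nat.abs_cast,
    abs_of_nonneg (by positivity : 0 ≤ exp α * lam * (T - t))]
  gcongr
  linarith [ht.1]

theorem continuousOn_jump_term (f' : ℝ → ℝ) (hf' : ContinuousOn f' (Ioi 0)) (α β lam T : ℝ)
    (k : ℕ) :
    ContinuousOn (fun p : ℝ × ℝ => f' (p.2 * exp (α * k + β * p.1 - β * T)) *
      (exp α * lam * (T - p.1)) ^ k / k.factorial) (univ ×ˢ Ioi 0) := by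
  refine ((hf'.comp (by fun_prop) fun p hp => ?_).mul (by fun_prop)).div_const _
  exact mul_pos hp.2 (exp_pos _)

theorem stmt_1_general (lam T : ℝ) (hlam : 0 < lam)
    (α β : ℝ)
    (f' : ℝ → ℝ)
    (hfc : ContinuousOn f' (Set.Ioi 0))
    (hii : ∀ x₀ : ℝ, 0 < x₀ → ∃ ε : ℝ, 0 < ε ∧ ε < x₀ ∧
      TendstoUniformlyOn
        (fun n x => ∑ k ∈ Finset.range n,
          |f' (x * Real.exp (α * (k : ℝ)))| * (Real.exp α * lam * T) ^ k / (k.factorial : ℝ))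
        (fun x => ∑' k : ℕ,
          |f' (x * Real.exp (α * (k : ℝ)))| * (Real.exp α * lam * T) ^ k / (k.factorial : ℝ))
        Filter.atTop (Set.Ioo (x₀ - ε) (x₀ + ε))) :
    ContinuousOn
      (fun p : ℝ × ℝ => Real.exp (-((lam + β) * (T - p.1))) * ∑' k : ℕ,
        f' (p.2 * Real.exp (α * (k : ℝ) + β * p.1 - β * T)) *
          (Real.exp α * lam * (T - p.1)) ^ k / (k.factorial : ℝ))
      (Set.Icc 0 T ×ˢ Set.Ioi 0) := by
  set φ : ℝ × ℝ → ℝ := fun p => p.2 * exp (β * p.1 - β * T)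
  refine continuousOn_of_locally_continuousOn fun p₀ hp₀ => ?_
  obtain ⟨ε, hε, -, hconv⟩ := hii (φ p₀) (mul_pos hp₀.2 (exp_pos _))
  set U := φ ⁻¹' Ioo (φ p₀ - ε) (φ p₀ + ε)
  refine ⟨U, isOpen_Ioo.preimage (by fun_prop), ⟨by linarith, by linarith⟩, ?_⟩
  have hsum := tendstoUniformlyOn_tsum_of_norm_le (s := Icc 0 T ×ˢ Ioi 0 ∩ U)
    (g := fun k (p : ℝ × ℝ) => f' (p.2 * exp (α * k + β * p.1 - β * T)) *
      (exp α * lam * (T - p.1)) ^ k / k.factorial)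
    ((hconv.comp φ).mono inter_subset_right) fun k p hp => abs_jump_term_le f' p.2 k hlam.le hp.1.1
  refine (Continuous.continuousOn (by fun_prop)).mul (hsum.continuousOn ?_)
  refine (Eventually.of_forall fun n => continuousOn_finsetSum _ fun k _ => ?_).frequently
  exact (continuousOn_jump_term f' hfc α β lam T k).mono
    fun p hp => ⟨trivial, hp.1.2⟩

theorem stmt_1 (σ lam T : ℝ) (hσ : 0 < σ) (hlam : 0 < lam) (hT : 0 < T)
    (α β : ℝ) (hα : α = Real.log (1 + σ)) (hβ : β = σ * lam)
    (f f' : ℝ → ℝ)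
    (hfd : ∀ x ∈ Set.Ioi (0 : ℝ), HasDerivAt f (f' x) x)
    (hfc : ContinuousOn f' (Set.Ioi 0))
    (hi : ∃ S₀ : ℝ, 0 < S₀ ∧ Summable (fun k : ℕ =>
      |f (S₀ * Real.exp (α * (k : ℝ) - β * T))| * (lam * T) ^ k / (k.factorial : ℝ)))
    (hii : ∀ x₀ : ℝ, 0 < x₀ → ∃ ε : ℝ, 0 < ε ∧ ε < x₀ ∧
      TendstoUniformlyOn
        (fun n x => ∑ k ∈ Finset.range n,
          |f' (x * Real.exp (α * (k : ℝ)))| * (Real.exp α * lam * T) ^ k / (k.factorial : ℝ))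
        (fun x => ∑' k : ℕ,
          |f' (x * Real.exp (α * (k : ℝ)))| * (Real.exp α * lam * T) ^ k / (k.factorial : ℝ))
        Filter.atTop (Set.Ioo (x₀ - ε) (x₀ + ε))) :
    ContinuousOn
      (fun p : ℝ × ℝ => Real.exp (-((lam + β) * (T - p.1))) * ∑' k : ℕ,
        f' (p.2 * Real.exp (α * (k : ℝ) + β * p.1 - β * T)) *
          (Real.exp α * lam * (T - p.1)) ^ k / (k.factorial : ℝ))
      (Set.Icc 0 T ×ˢ Set.Ioi 0) :=
  stmt_1_general lam T hlam α β f' hfc hii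
end

section
/- Let M∈(0,∞) and let a_k≥0, k=0,1,…, be real numbers with ∑_{k=0}^∞ a_k M^k/k! < ∞. Let N:[0,M]→ℕ be a nondecreasing, right-continuous, integer-valued function with N(0)=0 (so N vanishes on some interval [0,ε] with ε>0). Then the series ∑_{k=0}^∞ a_{k+N(M−x)} x^k/k! converges uniformly in x∈[0,M]. -/
/-!
Right-continuity at `0` gives `ε > 0` with `N = 0` on `[0, ε]`. For `x ≥ M - ε` the shift
`N (M - x)` vanishes and the `k`-th term is at most `|a k| M^k / k!`; for `x ≤ M - ε` the shift is
at most `N M` and the term is at most `∑_{n ≤ N M} |a (k + n)| (M - ε)^k / k!`. Each shifted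
series `∑ₖ a (k + n) rᵏ / k!` with `|r| < M` converges, since `(k + n)! / k! · (r / M)ᵏ` is summable,
so the Weierstrass M-test applies.
-/

open Filter Set Finset

lemma mul_pow_div_factorial_eq_descFactorial_mul {M : ℝ} (hM : M ≠ 0) (c r : ℝ) (k n : ℕ) :
    c * r ^ k / k.factorial =
      c * M ^ (k + n) / (k + n).factorial * ((k + n).descFactorial n * (r / M) ^ k) / M ^ n := by
  have h := Nat.factorial_mul_descFactorial (Nat.le_add_left n k)
  rw [Nat.add_sub_cancel] at h
  have h' : ((k + n).factorial : ℝ) = k.factorial * (k + n).descFactorial n := by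
    exact_mod_cast h.symm
  rw [h', div_pow, pow_add]
  field_simp

lemma summable_shift_mul_pow_div_factorial {a : ℕ → ℝ} {M r : ℝ} (hr : |r| < M)
    (hsum : Summable fun k => a k * M ^ k / k.factorial) (n : ℕ) :
    Summable fun k => a (k + n) * r ^ k / k.factorial := by
  have hM : 0 < M := (abs_nonneg r).trans_lt hr
  have hq : ‖r / M‖ < 1 := by rwa [Real.norm_eq_abs, abs_div, abs_of_pos hM, div_lt_one hM]
  set g : ℕ → ℝ := fun k => |(k + n).descFactorial n * (r / M) ^ k|
  have hg : Summable g := (summable_descFactorial_mul_geometric_of_norm_lt_one (R := ℝ) n hq).abs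
  have hf : Summable fun k => |a (k + n) * M ^ (k + n) / (k + n).factorial| :=
    (summable_nat_add_iff n).2 hsum.abs
  refine .of_norm_bounded (hf.mul_right ((∑' k, g k) / M ^ n)) fun k => ?_
  rw [mul_pow_div_factorial_eq_descFactorial_mul hM.ne' _ r k n, Real.norm_eq_abs, abs_div,
    abs_mul, abs_of_pos (pow_pos hM n), mul_div_assoc]
  gcongr
  exact hg.le_tsum k fun _ _ => abs_nonneg _

lemma norm_mul_pow_div_factorial_le {c x r : ℝ} (hx : 0 ≤ x) (hxr : x ≤ r) (k : ℕ) :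
    ‖c * x ^ k / k.factorial‖ ≤ |c| * r ^ k / k.factorial := by
  rw [Real.norm_eq_abs, abs_div, abs_mul, abs_pow, abs_of_nonneg hx, Nat.abs_cast]
  gcongr

lemma tendstoUniformlyOn_tsum_shift_mul_pow_div_factorial {a : ℕ → ℝ} {M r : ℝ} {s : ℝ → ℕ}
    {n₀ : ℕ} (hsum : Summable fun k => a k * M ^ k / k.factorial) (hr : 0 ≤ r) (hrM : r < M)
    (hs : ∀ x ∈ Icc 0 M, s x ≤ n₀) (hs_zero : ∀ x ∈ Icc 0 M, s x ≠ 0 → x ≤ r) :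
    TendstoUniformlyOn (fun n x => ∑ k ∈ range n, a (k + s x) * x ^ k / k.factorial)
      (fun x => ∑' k, a (k + s x) * x ^ k / k.factorial) atTop (Icc 0 M) := by
  have hM : 0 ≤ M := hr.trans hrM.le
  set u : ℕ → ℝ := fun k =>
    |a k| * M ^ k / k.factorial + ∑ n ∈ range (n₀ + 1), |a (k + n)| * r ^ k / k.factorial
  have hu : Summable u := by
    refine .add ?_ (summable_sum fun n _ => ?_)
    · simpa [abs_mul, abs_div, abs_of_nonneg hM] using hsum.abs
    · have hr' : |r| < M := by rwa [abs_of_nonneg hr]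
      simpa [abs_mul, abs_div, abs_of_nonneg hr] using
        (summable_shift_mul_pow_div_factorial hr' hsum n).abs
  refine tendstoUniformlyOn_tsum_nat hu fun k x hx => ?_
  rcases eq_or_ne (s x) 0 with h | h
  · rw [h, add_zero]
    exact (norm_mul_pow_div_factorial_le hx.1 hx.2 k).trans
      (le_add_of_nonneg_right (by positivity))
  · calc ‖a (k + s x) * x ^ k / k.factorial‖ ≤ |a (k + s x)| * r ^ k / k.factorial :=
          norm_mul_pow_div_factorial_le hx.1 (hs_zero x hx h) k
      _ ≤ ∑ n ∈ range (n₀ + 1), |a (k + n)| * r ^ k / k.factorial :=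
          single_le_sum (f := fun n => |a (k + n)| * r ^ k / k.factorial) (fun n _ => by positivity)
            (mem_range.2 (Nat.lt_succ_of_le (hs x hx)))
      _ ≤ u k := le_add_of_nonneg_left (by positivity)

theorem stmt_3_general (M : ℝ) (hM : 0 < M) (a : ℕ → ℝ)
    (hsum : Summable (fun k : ℕ => a k * M ^ k / (k.factorial : ℝ)))
    (N : ℝ → ℕ) (hmono : MonotoneOn N (Set.Icc 0 M))
    (hrc : ∀ x ∈ Set.Ico (0 : ℝ) M, ∃ δ > (0 : ℝ),
      ∀ y ∈ Set.Ico x (x + δ) ∩ Set.Icc 0 M, N y = N x)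
    (hN0 : N 0 = 0) :
    TendstoUniformlyOn
      (fun n x => ∑ k ∈ Finset.range n, a (k + N (M - x)) * x ^ k / (k.factorial : ℝ))
      (fun x => ∑' k : ℕ, a (k + N (M - x)) * x ^ k / (k.factorial : ℝ))
      Filter.atTop (Set.Icc 0 M) := by
  obtain ⟨δ, hδ, hNδ⟩ := hrc 0 ⟨le_rfl, hM⟩
  set ε := min (δ / 2) M
  have hε : 0 < ε := lt_min (half_pos hδ) hM
  have hεM : ε ≤ M := min_le_right _ _
  have hεδ : ε < 0 + δ := by linarith [min_le_left (δ / 2) M]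
  have hN_zero : ∀ y ∈ Icc 0 ε, N y = 0 := fun y hy =>
    hN0 ▸ hNδ y ⟨⟨hy.1, hy.2.trans_lt hεδ⟩, hy.1, hy.2.trans hεM⟩
  refine tendstoUniformlyOn_tsum_shift_mul_pow_div_factorial (r := M - ε) (n₀ := N M) hsum
    (sub_nonneg.2 hεM) (sub_lt_self M hε) (fun x hx => ?_) (fun x hx hNx => ?_)
  · exact hmono ⟨sub_nonneg.2 hx.2, by linarith [hx.1]⟩ ⟨hM.le, le_rfl⟩ (by linarith [hx.1])
  · by_contra! hx'
    exact hNx (hN_zero _ ⟨sub_nonneg.2 hx.2, by linarith⟩)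

theorem stmt_3 (M : ℝ) (hM : 0 < M) (a : ℕ → ℝ) (ha : ∀ k, 0 ≤ a k)
    (hsum : Summable (fun k : ℕ => a k * M ^ k / (k.factorial : ℝ)))
    (N : ℝ → ℕ) (hmono : MonotoneOn N (Set.Icc 0 M))
    (hrc : ∀ x ∈ Set.Ico (0 : ℝ) M, ∃ δ > (0 : ℝ),
      ∀ y ∈ Set.Ico x (x + δ) ∩ Set.Icc 0 M, N y = N x)
    (hN0 : N 0 = 0) :
    TendstoUniformlyOn
      (fun n x => ∑ k ∈ Finset.range n, a (k + N (M - x)) * x ^ k / (k.factorial : ℝ))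
      (fun x => ∑' k : ℕ, a (k + N (M - x)) * x ^ k / (k.factorial : ℝ))
      Filter.atTop (Set.Icc 0 M) :=
  stmt_3_general M hM a hsum N hmono hrc hN0
end

section
/- Let λ>0, T>0, x>0 and let 0<τ₁<τ₂<⋯<τ_m<T be given. Define ψ:[0,T]→ℝ by ψ(t) = (x/(λT)) ∏_{j: τ_j<t} (1 + 1/(λ(T−τ_j))) (so ψ ≡ x/(λT) on [0,τ₁] and ψ is constant on each interval (τ_n, τ_{n+1}]), and define M:[0,T]→ℝ by M(t) = x + ∑_{j: τ_j≤t} ψ(τ_j) − λ∫_0^t ψ(u)du. Then for every t∈[0,T], M(t) = (x(T−t)/T) ∏_{j: τ_j≤t} (1 + 1/(λ(T−τ_j))). In particular M(t)≥0 for all t∈[0,T] and M(T)=0. -/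
/-!
On the interval `(r, t]` between two consecutive jump times the integrand is constant,
`ψ = x/(λT) · ∏_{τ_j ≤ r} (1 + 1/(λ(T − τ_j)))`, so both `M` and the closed form decrease
by `λ(t − r)ψ(t)` from `r` to `t`. At a jump `t = τ_j` the closed form is multiplied by
`1 + 1/(λ(T − t))`, i.e. it increases by `x(T − t)/T · ∏ · 1/(λ(T − t)) = ψ(t)`, which is
exactly the jump of `∑ ψ(τ_j)`. Induction on the number of jumps before `t` finishes.
-/

open Finset Function

namespace PoissonPath

section StepFunction

variable {ι : Type*} [Fintype ι]

def NoJumpIn (τ : ι → ℝ) (r t : ℝ) : Prop := ∀ j, τ j ∉ Set.Ioo r t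

variable {τ : ι → ℝ} {r t : ℝ}

lemma filter_lt_eq_filter_le_of_noJumpIn (hgap : NoJumpIn τ r t) {u : ℝ}
    (hu : u ∈ Set.Ioc r t) :
    univ.filter (fun j => τ j < u) = univ.filter (fun j => τ j ≤ r) := by
  ext j
  simp only [mem_filter, mem_univ, true_and]
  exact ⟨fun h => not_lt.1 fun hr => hgap j ⟨hr, h.trans_le hu.2⟩, fun h => h.trans_lt hu.1⟩

lemma filter_le_eq_union_of_noJumpIn [DecidableEq ι] (hgap : NoJumpIn τ r t) (hrt : r ≤ t) :
    univ.filter (fun j => τ j ≤ t) =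
      univ.filter (fun j => τ j ≤ r) ∪ univ.filter (fun j => τ j = t) := by
  ext j
  simp only [mem_union, mem_filter, mem_univ, true_and]
  refine ⟨fun h => ?_, ?_⟩
  · by_contra! hne
    exact hgap j ⟨hne.1, h.lt_of_ne hne.2⟩
  · rintro (h | h)
    exacts [h.trans hrt, h.le]

lemma disjoint_filter_le_filter_eq (hrt : r < t) :
    Disjoint (univ.filter (fun j => τ j ≤ r)) (univ.filter (fun j => τ j = t)) :=
  disjoint_filter.2 fun _ _ hr ht => (hr.trans_lt hrt).ne ht

lemma sum_filter_le_of_noJumpIn [DecidableEq ι] (g : ℝ → ℝ) (hgap : NoJumpIn τ r t)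
    (hrt : r < t) :
    ∑ j ∈ univ.filter (fun j => τ j ≤ t), g (τ j) =
      ∑ j ∈ univ.filter (fun j => τ j ≤ r), g (τ j)
        + #(univ.filter (fun j => τ j = t)) * g t := by
  rw [filter_le_eq_union_of_noJumpIn hgap hrt.le, sum_union (disjoint_filter_le_filter_eq hrt),
    sum_congr rfl fun j hj => congrArg g (mem_filter.1 hj).2, sum_const, nsmul_eq_mul]

lemma prod_filter_le_of_noJumpIn [DecidableEq ι] (g : ℝ → ℝ) (hgap : NoJumpIn τ r t)
    (hrt : r < t) :
    ∏ j ∈ univ.filter (fun j => τ j ≤ t), g (τ j) =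
      (∏ j ∈ univ.filter (fun j => τ j ≤ r), g (τ j))
        * g t ^ #(univ.filter (fun j => τ j = t)) := by
  rw [filter_le_eq_union_of_noJumpIn hgap hrt.le, prod_union (disjoint_filter_le_filter_eq hrt),
    prod_congr rfl fun j hj => congrArg g (mem_filter.1 hj).2, prod_const]

lemma card_filter_eq_le_one (hτ : Injective τ) (t : ℝ) :
    #(univ.filter (fun j => τ j = t)) ≤ 1 :=
  card_le_one.2 fun _ hi _ hj => hτ <| (mem_filter.1 hi).2.trans (mem_filter.1 hj).2.symm

lemma monotone_prod_filter_lt (g : ℝ → ℝ) (hg : ∀ j, 1 ≤ g (τ j)) :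
    Monotone fun t => ∏ j ∈ univ.filter (fun j => τ j < t), g (τ j) :=
  fun _ _ hst => prod_le_prod_of_subset_of_one_le
    (monotone_filter_right _ fun _ _ h => h.trans_le hst)
    (fun j _ => zero_le_one.trans (hg j)) fun j _ _ => hg j

lemma integral_prod_filter_lt_of_noJumpIn (g : ℝ → ℝ) (hgap : NoJumpIn τ r t)
    (hrt : r ≤ t) :
    ∫ u in r..t, ∏ j ∈ univ.filter (fun j => τ j < u), g (τ j) =
      (t - r) * ∏ j ∈ univ.filter (fun j => τ j ≤ r), g (τ j) := by
  rw [intervalIntegral.integral_congr_ae (.of_forall fun u hu => by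
      rw [filter_lt_eq_filter_le_of_noJumpIn hgap (Set.uIoc_of_le hrt ▸ hu)]),
    intervalIntegral.integral_const, smul_eq_mul]

end StepFunction

section Compensated

variable {ι : Type*} [Fintype ι] (lam T x : ℝ) (τ : ι → ℝ)

noncomputable def jumpFactor (s : ℝ) : ℝ := 1 + 1 / (lam * (T - s))

noncomputable def integrand (t : ℝ) : ℝ :=
  x / (lam * T) * ∏ j ∈ univ.filter (fun j => τ j < t), jumpFactor lam T (τ j)

/-- `x + ∫₀ᵗ ψ d(N − λ·)` along the Poisson path whose jump times are the `τ j`. -/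
noncomputable def compensatedIntegral (t : ℝ) : ℝ :=
  x + ∑ j ∈ univ.filter (fun j => τ j ≤ t), integrand lam T x τ (τ j)
    - lam * ∫ u in (0 : ℝ)..t, integrand lam T x τ u

noncomputable def closedForm (t : ℝ) : ℝ :=
  x * (T - t) / T * ∏ j ∈ univ.filter (fun j => τ j ≤ t), jumpFactor lam T (τ j)

variable {lam T x τ}

lemma one_le_jumpFactor (hlam : 0 < lam) {s : ℝ} (hs : s < T) : 1 ≤ jumpFactor lam T s :=
  le_add_of_nonneg_right (one_div_nonneg.2 (mul_pos hlam (sub_pos.2 hs)).le)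

lemma intervalIntegrable_integrand (hlam : 0 < lam) (hτT : ∀ j, τ j < T) (a b : ℝ) :
    IntervalIntegrable (integrand lam T x τ) MeasureTheory.volume a b :=
  (monotone_prod_filter_lt _ fun j => one_le_jumpFactor hlam (hτT j)).intervalIntegrable
    |>.const_mul _

lemma integral_integrand_of_noJumpIn {r t : ℝ} (hgap : NoJumpIn τ r t) (hrt : r ≤ t) :
    ∫ u in r..t, integrand lam T x τ u = (t - r) * integrand lam T x τ t := by
  rcases hrt.eq_or_lt with rfl | hrt
  · simp
  simp only [integrand, intervalIntegral.integral_const_mul,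
    integral_prod_filter_lt_of_noJumpIn _ hgap hrt.le,
    filter_lt_eq_filter_le_of_noJumpIn hgap ⟨hrt, le_rfl⟩]
  ring

lemma closedForm_nonneg (hlam : 0 < lam) (hT : 0 < T) (hx : 0 ≤ x) (hτT : ∀ j, τ j < T)
    {t : ℝ} (htT : t ≤ T) : 0 ≤ closedForm lam T x τ t :=
  mul_nonneg (div_nonneg (mul_nonneg hx (sub_nonneg.2 htT)) hT.le)
    (prod_nonneg fun j _ => zero_le_one.trans (one_le_jumpFactor hlam (hτT j)))

lemma compensatedIntegral_zero (hT : T ≠ 0) (hτ0 : ∀ j, 0 < τ j) :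
    compensatedIntegral lam T x τ 0 = closedForm lam T x τ 0 := by
  have hempty : univ.filter (fun j => τ j ≤ 0) = ∅ :=
    filter_false_of_mem fun j _ => not_le.2 (hτ0 j)
  simp [compensatedIntegral, closedForm, hempty, hT]

lemma compensatedIntegral_eq_of_noJumpIn (hlam : 0 < lam) (hτT : ∀ j, τ j < T)
    (hτ : Injective τ) {r t : ℝ} (hgap : NoJumpIn τ r t) (hrt : r ≤ t)
    (hr : compensatedIntegral lam T x τ r = closedForm lam T x τ r) :
    compensatedIntegral lam T x τ t = closedForm lam T x τ t := by
  classical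
  rcases hrt.eq_or_lt with rfl | hrt
  · exact hr
  set P := ∏ j ∈ univ.filter (fun j => τ j ≤ r), jumpFactor lam T (τ j)
  have hψt : integrand lam T x τ t = x / (lam * T) * P := by
    rw [integrand, filter_lt_eq_filter_le_of_noJumpIn hgap ⟨hrt, le_rfl⟩]
  have hI : ∫ u in (0 : ℝ)..t, integrand lam T x τ u =
      (∫ u in (0 : ℝ)..r, integrand lam T x τ u) + (t - r) * (x / (lam * T) * P) := by
    rw [← intervalIntegral.integral_add_adjacent_intervals
      (intervalIntegrable_integrand hlam hτT 0 r) (intervalIntegrable_integrand hlam hτT r t),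
      integral_integrand_of_noJumpIn hgap hrt.le, hψt]
  have hc : lam * (x / (lam * T)) = x / T := by field_simp
  unfold compensatedIntegral closedForm at hr ⊢
  rw [sum_filter_le_of_noJumpIn _ hgap hrt, prod_filter_le_of_noJumpIn _ hgap hrt, hI, hψt]
  obtain hk | hk := Nat.le_one_iff_eq_zero_or_eq_one.1 (card_filter_eq_le_one hτ t)
  · rw [hk]
    linear_combination hr - (t - r) * P * hc
  · obtain ⟨j, hj⟩ := card_eq_one.1 hk
    have hτj : τ j = t :=
      (mem_filter.1 (hj.symm ▸ mem_singleton_self j : j ∈ univ.filter _)).2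
    have htT : T - t ≠ 0 := sub_ne_zero.2 (hτj ▸ hτT j).ne'
    have hjump : x * (T - t) / T * (1 / (lam * (T - t))) = x / (lam * T) := by field_simp
    rw [hk, pow_one, jumpFactor]
    linear_combination hr - (t - r) * P * hc - P * hjump

theorem compensatedIntegral_eq_closedForm (hlam : 0 < lam) (hT : T ≠ 0) (hτ : Injective τ)
    (hτ0 : ∀ j, 0 < τ j) (hτT : ∀ j, τ j < T) {t : ℝ} (ht : 0 ≤ t) :
    compensatedIntegral lam T x τ t = closedForm lam T x τ t := by
  induction hn : #(univ.filter (fun j => τ j < t)) using Nat.strong_induction_on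
    generalizing t with
  | _ n ih =>
  obtain hnone | hsome := (univ.filter (fun j => τ j < t)).eq_empty_or_nonempty
  · refine compensatedIntegral_eq_of_noJumpIn hlam hτT hτ (r := 0) (fun j hj => ?_) ht
      (compensatedIntegral_zero hT hτ0)
    exact (filter_eq_empty_iff.1 hnone) (mem_univ j) hj.2
  · obtain ⟨j₀, hj₀, hmax⟩ := exists_max_image _ τ hsome
    have hgap : NoJumpIn τ (τ j₀) t := fun j hj =>
      hj.1.not_ge (hmax j (mem_filter.2 ⟨mem_univ j, hj.2⟩))
    refine compensatedIntegral_eq_of_noJumpIn hlam hτT hτ hgap (mem_filter.1 hj₀).2.le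
      (ih _ ?_ (hτ0 j₀).le rfl)
    rw [← hn]
    refine card_lt_card (ssubset_iff_of_subset ?_ |>.2 ⟨j₀, hj₀, by simp⟩)
    exact monotone_filter_right _ fun j _ h => h.trans (mem_filter.1 hj₀).2

end Compensated

end PoissonPath

theorem stmt_4 (lam T x : ℝ) (hlam : 0 < lam) (hT : 0 < T) (hx : 0 < x)
    (m : ℕ) (τ : Fin m → ℝ) (hτm : StrictMono τ) (hτ : ∀ j, 0 < τ j ∧ τ j < T)
    (ψ Mf : ℝ → ℝ)
    (hψ : ∀ t : ℝ, ψ t = x / (lam * T) *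
      ∏ j ∈ Finset.univ.filter (fun j : Fin m => τ j < t), (1 + 1 / (lam * (T - τ j))))
    (hMf : ∀ t : ℝ, Mf t = x +
      (∑ j ∈ Finset.univ.filter (fun j : Fin m => τ j ≤ t), ψ (τ j))
      - lam * ∫ u in (0 : ℝ)..t, ψ u) :
    (∀ t ∈ Set.Icc (0 : ℝ) T,
      Mf t = x * (T - t) / T *
        ∏ j ∈ Finset.univ.filter (fun j : Fin m => τ j ≤ t), (1 + 1 / (lam * (T - τ j))) ∧
      0 ≤ Mf t) ∧
    Mf T = 0 := by
  obtain rfl : ψ = PoissonPath.integrand lam T x τ := funext hψ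
  obtain rfl : Mf = PoissonPath.compensatedIntegral lam T x τ := funext hMf
  have hτT : ∀ j, τ j < T := fun j => (hτ j).2
  have key {t : ℝ} (ht : 0 ≤ t) :
      PoissonPath.compensatedIntegral lam T x τ t = PoissonPath.closedForm lam T x τ t :=
    PoissonPath.compensatedIntegral_eq_closedForm hlam hT.ne' hτm.injective (fun j => (hτ j).1)
      hτT ht
  refine ⟨fun t ht => ⟨key ht.1, ?_⟩, ?_⟩
  · rw [key ht.1]
    exact PoissonPath.closedForm_nonneg hlam hT hx.le hτT ht.2
  · rw [key hT.le, PoissonPath.closedForm, sub_self, mul_zero, zero_div, zero_mul]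
end

section
/- Let λ>0, T>0 and c:ℕ→ℝ with ∑_{k=0}^∞ |c_k| (λT)^k/k! < ∞. For n∈ℕ define g_n(t) = e^{−λ(T−t)} ∑_{k=0}^∞ c_{k+n} (λ(T−t))^k/k!. Then for every n∈ℕ and every t∈(0,T], g_n and g_{n+1} are well defined (the series converge absolutely), g_n is differentiable at t (one-sidedly at t=T), and g_n'(t) = λ( g_n(t) − g_{n+1}(t) ). -/
/-!
With `x = λ(T - t)` we have `g n t = e^{-x} G_n(x)`, where `G_n = egf (c (· + n))` is the
exponential generating function of the shifted sequence. Absolute convergence at radius `λT`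
survives shifting at every smaller radius `r < R`, because the ratio of the terms is
`(k + 1)(r/R)^k / R → 0`. Hence `G_n` may be differentiated termwise on `(-λT, λT)`, giving
`G_n' = G_{n+1}`, and the chain and product rules turn this into `g_n' = λ(g_n - g_{n+1})`.
-/

open Filter Asymptotics

noncomputable def egf (a : ℕ → ℝ) (x : ℝ) : ℝ :=
  ∑' k, a k * x ^ k / (k.factorial : ℝ)

lemma summable_abs_shift_one_of_lt {a : ℕ → ℝ} {r R : ℝ} (hr : 0 ≤ r) (hrR : r < R)
    (h : Summable fun k => |a k| * R ^ k / (k.factorial : ℝ)) :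
    Summable fun k => |a (k + 1)| * r ^ k / (k.factorial : ℝ) := by
  have hR : 0 < R := hr.trans_lt hrR
  have hq : r / R < 1 := (div_lt_one hR).2 hrR
  have hratio : Tendsto (fun k : ℕ => ((k : ℝ) + 1) * (r / R) ^ k / R) atTop (nhds 0) := by
    have h1 := tendsto_self_mul_const_pow_of_lt_one (div_nonneg hr hR.le) hq
    have h2 := tendsto_pow_atTop_nhds_zero_of_lt_one (div_nonneg hr hR.le) hq
    simpa [add_mul] using (h1.add h2).div_const R
  have hfactor : ∀ k : ℕ, |a (k + 1)| * r ^ k / (k.factorial : ℝ) =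
      |a (k + 1)| * R ^ (k + 1) / ((k + 1).factorial : ℝ) * (((k : ℝ) + 1) * (r / R) ^ k / R) := by
    intro k
    rw [Nat.factorial_succ, Nat.cast_mul, pow_succ, div_pow]
    push_cast
    field_simp
  refine summable_of_isBigO_nat ((summable_nat_add_iff 1).mpr h) ?_
  exact ((isBigO_refl _ atTop).mul (hratio.isBigO_one ℝ)).congr
    (fun k => (hfactor k).symm) fun k => mul_one _

lemma summable_abs_shift_of_lt {a : ℕ → ℝ} {r R : ℝ} (hr : 0 ≤ r) (hrR : r < R)
    (h : Summable fun k => |a k| * R ^ k / (k.factorial : ℝ)) (n : ℕ) :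
    Summable fun k => |a (k + n)| * r ^ k / (k.factorial : ℝ) := by
  induction n generalizing r with
  | zero =>
    refine h.of_nonneg_of_le (fun k => by positivity) fun k => ?_
    simp only [add_zero]
    gcongr
  | succ n ih =>
    have hmid : r < (r + R) / 2 := by linarith
    simpa only [Nat.add_right_comm _ 1 n, add_assoc] using
      summable_abs_shift_one_of_lt (a := fun k => a (k + n)) hr hmid (ih (by linarith) (by linarith))

lemma summable_mul_pow_div_factorial_of_abs {a : ℕ → ℝ} {x : ℝ}
    (h : Summable fun k => |a k| * |x| ^ k / (k.factorial : ℝ)) :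
    Summable fun k => a k * x ^ k / (k.factorial : ℝ) :=
  .of_norm <| h.congr fun k => by simp

lemma mul_natCast_succ_mul_pow_div_factorial_succ (b y : ℝ) (k : ℕ) :
    b * (((k + 1 : ℕ) : ℝ) * y ^ (k + 1 - 1)) / ((k + 1).factorial : ℝ) =
      b * y ^ k / (k.factorial : ℝ) := by
  rw [Nat.add_sub_cancel, Nat.factorial_succ, Nat.cast_mul]
  field_simp

lemma hasDerivAt_egf {a : ℕ → ℝ} {x R : ℝ} (hx : |x| < R)
    (h : Summable fun k => |a k| * R ^ k / (k.factorial : ℝ)) :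
    HasDerivAt (egf a) (egf (fun k => a (k + 1)) x) x := by
  obtain ⟨r, hxr, hrR⟩ := exists_between hx
  have hr : 0 ≤ r := (abs_nonneg x).trans hxr.le
  have hderiv : ∀ (k : ℕ) (y : ℝ), HasDerivAt (fun z => a k * z ^ k / (k.factorial : ℝ))
      (a k * ((k : ℝ) * y ^ (k - 1)) / (k.factorial : ℝ)) y :=
    fun k y => ((hasDerivAt_pow k y).const_mul (a k)).div_const _
  have hbound : Summable fun k => |a k| * ((k : ℝ) * r ^ (k - 1)) / (k.factorial : ℝ) :=
    (summable_nat_add_iff 1).mp <| (summable_abs_shift_of_lt hr hrR h 1).congr fun k =>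
      (mul_natCast_succ_mul_pow_div_factorial_succ _ r k).symm
  have hball : ∀ (k : ℕ), ∀ y ∈ Metric.ball (0 : ℝ) r,
      ‖a k * ((k : ℝ) * y ^ (k - 1)) / (k.factorial : ℝ)‖ ≤
        |a k| * ((k : ℝ) * r ^ (k - 1)) / (k.factorial : ℝ) := by
    intro k y hy
    rw [mem_ball_zero_iff, Real.norm_eq_abs] at hy
    simp only [Real.norm_eq_abs, abs_div, abs_mul, abs_pow, Nat.abs_cast]
    gcongr
  have hxball : x ∈ Metric.ball (0 : ℝ) r := mem_ball_zero_iff.mpr hxr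
  have hsum_x : Summable fun k => a k * x ^ k / (k.factorial : ℝ) :=
    summable_mul_pow_div_factorial_of_abs (summable_abs_shift_of_lt (abs_nonneg x) hx h 0)
  refine (hasDerivAt_tsum_of_isPreconnected hbound Metric.isOpen_ball
    (convex_ball 0 r).isPreconnected (fun k y _ => hderiv k y) hball hxball hsum_x
    hxball).congr_deriv ?_
  rw [tsum_eq_zero_add']
  · simp only [CharP.cast_eq_zero, zero_mul, mul_zero, zero_div, zero_add,
      mul_natCast_succ_mul_pow_div_factorial_succ, egf]
  · simp only [mul_natCast_succ_mul_pow_div_factorial_succ]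
    exact summable_mul_pow_div_factorial_of_abs (summable_abs_shift_of_lt (abs_nonneg x) hx h 1)

theorem stmt_5_general (lam T : ℝ) (hlam : 0 < lam) (c : ℕ → ℝ)
    (hsum : Summable (fun k : ℕ => |c k| * (lam * T) ^ k / (k.factorial : ℝ)))
    (g : ℕ → ℝ → ℝ)
    (hg : ∀ (n : ℕ) (t : ℝ), g n t = Real.exp (-(lam * (T - t))) *
      ∑' k : ℕ, c (k + n) * (lam * (T - t)) ^ k / (k.factorial : ℝ)) :
    ∀ n : ℕ, ∀ t ∈ Set.Ioc (0 : ℝ) T,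
      Summable (fun k : ℕ => |c (k + n)| * (lam * (T - t)) ^ k / (k.factorial : ℝ)) ∧
      Summable (fun k : ℕ => |c (k + (n + 1))| * (lam * (T - t)) ^ k / (k.factorial : ℝ)) ∧
      HasDerivWithinAt (g n) (lam * (g n t - g (n + 1) t)) (Set.Iic T) t ∧
      (t < T → HasDerivAt (g n) (lam * (g n t - g (n + 1) t)) t) := by
  intro n t ⟨ht0, htT⟩
  have hx0 : 0 ≤ lam * (T - t) := mul_nonneg hlam.le (sub_nonneg.2 htT)
  have hxT : lam * (T - t) < lam * T := by nlinarith
  obtain ⟨R, hxR, hRT⟩ := exists_between hxT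
  have hinner : HasDerivAt (fun s => lam * (T - s)) (-lam) t := by
    simpa using ((hasDerivAt_id t).const_sub T).const_mul lam
  have hegf : HasDerivAt (fun s => egf (fun k => c (k + n)) (lam * (T - s)))
      (egf (fun k => c (k + (n + 1))) (lam * (T - t)) * -lam) t := by
    have h := hasDerivAt_egf (by rwa [abs_of_nonneg hx0])
      (summable_abs_shift_of_lt (hx0.trans hxR.le) hRT hsum n)
    simp only [Nat.add_right_comm _ 1 n, add_assoc] at h
    exact h.comp t hinner
  have hmain : HasDerivAt (g n) (lam * (g n t - g (n + 1) t)) t := by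
    rw [hg n t, hg (n + 1) t, show g n = _ from funext (hg n)]
    exact ((hinner.fun_neg.exp).mul hegf).congr_deriv (by unfold egf; ring)
  exact ⟨summable_abs_shift_of_lt hx0 hxT hsum n, summable_abs_shift_of_lt hx0 hxT hsum (n + 1),
    hmain.hasDerivWithinAt, fun _ => hmain⟩

theorem stmt_5 (lam T : ℝ) (hlam : 0 < lam) (hT : 0 < T) (c : ℕ → ℝ)
    (hsum : Summable (fun k : ℕ => |c k| * (lam * T) ^ k / (k.factorial : ℝ)))
    (g : ℕ → ℝ → ℝ)
    (hg : ∀ (n : ℕ) (t : ℝ), g n t = Real.exp (-(lam * (T - t))) *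
      ∑' k : ℕ, c (k + n) * (lam * (T - t)) ^ k / (k.factorial : ℝ)) :
    ∀ n : ℕ, ∀ t ∈ Set.Ioc (0 : ℝ) T,
      Summable (fun k : ℕ => |c (k + n)| * (lam * (T - t)) ^ k / (k.factorial : ℝ)) ∧
      Summable (fun k : ℕ => |c (k + (n + 1))| * (lam * (T - t)) ^ k / (k.factorial : ℝ)) ∧
      HasDerivWithinAt (g n) (lam * (g n t - g (n + 1) t)) (Set.Iic T) t ∧
      (t < T → HasDerivAt (g n) (lam * (g n t - g (n + 1) t)) t) :=
  stmt_5_general lam T hlam c hsum g hg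
end
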